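/- arXiv:1603.07809 — 2 statements merged into one kernel-verified Lean document; each statement's English description precedes it below -/
import Mathlib

section
/- (Godbole–Skipper–Sunley bound) Let t, v be fixed integers with t ≥ 2 and v ≥ 2. Then d(t,v) = limsup_{k→∞} CAN(t,k,v)/log k ≤ (t − 1) / log(v^t/(v^t − 1)). -/
/-- An `N × k` array `A` over alphabet `Fin v` covers the `t`-way interaction
given by distinct columns `c` and values `a` if some row agrees with `a` on `c`. -/
def Covers {N k v t : ℕ} (A : Fin N → Fin k → Fin v)
    (c : Fin t → Fin k) (a : Fin t → Fin v) : Prop :=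
  ∃ r : Fin N, ∀ i : Fin t, A r (c i) = a i

/-- `A` is a covering array `CA(N; t, k, v)`: every `t`-way interaction is covered. -/
def IsCoveringArray (N t k v : ℕ) (A : Fin N → Fin k → Fin v) : Prop :=
  ∀ c : Fin t → Fin k, Function.Injective c → ∀ a : Fin t → Fin v, Covers A c a

/-- The covering array number `CAN(t, k, v)`: the least `N` admitting a `CA(N; t, k, v)`. -/
noncomputable def CAN (t k v : ℕ) : ℕ :=
  sInf {N : ℕ | ∃ A : Fin N → Fin k → Fin v, IsCoveringArray N t k v A}

/-!
Alteration argument. In a uniformly random `N × 2k` array over `Fin v`, a fixed `t`-way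
interaction on distinct columns is uncovered with probability `(1 - v⁻ᵗ)ᴺ`, so some array has at
most `(2kv)ᵗ (1 - v⁻ᵗ)ᴺ` uncovered interactions. As soon as
`N ≥ ((t - 1) log k + t log (2v)) / log (vᵗ / (vᵗ - 1))` this is at most `k`, and deleting one
column of every uncovered interaction leaves a covering array with `k` columns. Dividing by
`log k` and letting `k → ∞` gives the bound.
-/

open Finset Real Filter Topology

theorem card_filter_forall_apply_eq {ι κ α : Type*} [Fintype ι] [DecidableEq ι] [Fintype κ]
    [Fintype α] [DecidableEq α] {c : κ → ι} (hc : Function.Injective c) (a : κ → α) :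
    #{f : ι → α | ∀ i, f (c i) = a i} = Fintype.card α ^ (Fintype.card ι - Fintype.card κ) := by
  have hpi : ({f : ι → α | ∀ i, f (c i) = a i} : Finset (ι → α)) =
      Fintype.piFinset fun j => {x | ∀ i, c i = j → x = a i} := by
    ext f
    simp only [mem_filter, mem_univ, true_and, Fintype.mem_piFinset]
    constructor
    · rintro h _ i rfl
      exact h i
    · exact fun h i => h _ i rfl
  have hfiber : ∀ j, #({x | ∀ i, c i = j → x = a i} : Finset α) =
      if j ∈ (univ.image c)ᶜ then Fintype.card α else 1 := by
    intro j
    split_ifs with hj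
    · rw [filter_true_of_mem, card_univ]
      rintro x - i rfl
      exact absurd (mem_image_of_mem c (mem_univ i)) (mem_compl.mp hj)
    · obtain ⟨i, -, rfl⟩ := mem_image.mp (notMem_compl.mp hj)
      rw [card_eq_one]
      refine ⟨a i, ?_⟩
      ext x
      simp only [mem_filter, mem_univ, true_and, mem_singleton]
      exact ⟨fun h => h i rfl, fun hx i' hi' => hc hi' ▸ hx⟩
  rw [hpi, Fintype.card_piFinset, Finset.prod_congr rfl fun j _ => hfiber j, prod_ite_mem,
    univ_inter, prod_const, card_compl, card_image_of_injective _ hc, card_univ]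

instance {N k v t : ℕ} (A : Fin N → Fin k → Fin v) (c : Fin t → Fin k) (a : Fin t → Fin v) :
    Decidable (Covers A c a) :=
  inferInstanceAs (Decidable (∃ r, ∀ i, A r (c i) = a i))

theorem card_filter_not_covers {N t K v : ℕ} {c : Fin t → Fin K} (hc : Function.Injective c)
    (a : Fin t → Fin v) :
    #{A : Fin N → Fin K → Fin v | ¬Covers A c a} = (v ^ K - v ^ (K - t)) ^ N := by
  have hpi : ({A : Fin N → Fin K → Fin v | ¬Covers A c a} : Finset _) =
      Fintype.piFinset fun _ => ({row | ∀ i, row (c i) = a i} : Finset (Fin K → Fin v))ᶜ := by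
    ext A
    simp [Covers]
  have h := card_filter_forall_apply_eq (α := Fin v) hc a
  simp only [Fintype.card_fin] at h
  rw [hpi, Fintype.card_piFinset_const, card_compl, Fintype.card_fun, Fintype.card_fin,
    Fintype.card_fin, ← h]
  -- the two filters differ only in their `Decidable` instances
  congr 3
  ext
  simp

def uncovered {N K v : ℕ} (t : ℕ) (A : Fin N → Fin K → Fin v) :
    Finset ((Fin t → Fin K) × (Fin t → Fin v)) :=
  {p | Function.Injective p.1 ∧ ¬Covers A p.1 p.2}

theorem card_filter_mem_uncovered_le {N t K v : ℕ} (p : (Fin t → Fin K) × (Fin t → Fin v)) :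
    #{A : Fin N → Fin K → Fin v | p ∈ uncovered t A} ≤ (v ^ K - v ^ (K - t)) ^ N := by
  by_cases hp : Function.Injective p.1
  · rw [← card_filter_not_covers hp p.2]
    exact card_le_card fun A => by simp [uncovered]
  · simp [uncovered, hp]

theorem sum_card_uncovered_le {N t K v : ℕ} :
    ∑ A : Fin N → Fin K → Fin v, #(uncovered t A) ≤ K ^ t * v ^ t * (v ^ K - v ^ (K - t)) ^ N :=
  calc ∑ A : Fin N → Fin K → Fin v, #(uncovered t A)
      = ∑ p : (Fin t → Fin K) × (Fin t → Fin v),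
          #{A : Fin N → Fin K → Fin v | p ∈ uncovered t A} := by
        simp only [card_filter]
        rw [Finset.sum_comm]
        simp
    _ ≤ ∑ _p : (Fin t → Fin K) × (Fin t → Fin v), ((v ^ K - v ^ (K - t)) ^ N : ℕ) :=
        sum_le_sum fun p _ => card_filter_mem_uncovered_le p
    _ = K ^ t * v ^ t * (v ^ K - v ^ (K - t)) ^ N := by simp

theorem exists_card_uncovered_le {N t K v : ℕ} (m : ℕ)
    (h : K ^ t * v ^ t * (v ^ K - v ^ (K - t)) ^ N < (m + 1) * v ^ (K * N)) :
    ∃ A : Fin N → Fin K → Fin v, #(uncovered t A) ≤ m := by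
  have hsum : ∑ A : Fin N → Fin K → Fin v, #(uncovered t A)
      < ∑ _A : Fin N → Fin K → Fin v, (m + 1) := by
    refine sum_card_uncovered_le.trans_lt (h.trans_eq ?_)
    simp [← pow_mul, mul_comm]
  obtain ⟨A, -, hA⟩ := exists_lt_of_sum_lt hsum
  exact ⟨A, Nat.lt_succ_iff.mp hA⟩

theorem CAN_le_of_card_uncovered_le {N t k K v : ℕ} (ht : 0 < t) (hk : k ≤ K)
    (A : Fin N → Fin K → Fin v) (hA : #(uncovered t A) ≤ K - k) : CAN t k v ≤ N := by
  set S : Finset (Fin K) := (uncovered t A).image fun p => p.1 ⟨0, ht⟩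
  have hS : #S ≤ K - k := card_image_le.trans hA
  obtain ⟨e⟩ : Nonempty (Fin k ↪ (Sᶜ : Finset (Fin K))) :=
    Function.Embedding.nonempty_of_card_le <| by
      simp only [Fintype.card_fin, Fintype.card_coe, card_compl]
      omega
  refine Nat.sInf_le ⟨fun r j => A r (e j).1, fun c hc a => ?_⟩
  by_contra hnc
  have hmem : (fun i => (e (c i)).1, a) ∈ uncovered t A := by
    simp only [uncovered, mem_filter, mem_univ, true_and]
    exact ⟨Subtype.val_injective.comp (e.injective.comp hc), hnc⟩
  exact mem_compl.mp (e (c ⟨0, ht⟩)).2 (mem_image_of_mem _ hmem)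

theorem CAN_le_of_expected_uncovered_lt {N t k K v : ℕ} (ht : 0 < t) (hk : k ≤ K) (htK : t ≤ K)
    (hv : 0 < v) (h : ((K : ℝ) * v) ^ t * (1 - ((v : ℝ) ^ t)⁻¹) ^ N < K - k + 1) :
    CAN t k v ≤ N := by
  have hv' : (0 : ℝ) < v := Nat.cast_pos.mpr hv
  have hsub : ((v ^ K - v ^ (K - t) : ℕ) : ℝ) = (v : ℝ) ^ K * (1 - ((v : ℝ) ^ t)⁻¹) := by
    rw [Nat.cast_sub (Nat.pow_le_pow_right hv (Nat.sub_le K t)), Nat.cast_pow, Nat.cast_pow,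
      pow_sub₀ _ hv'.ne' htK]
    ring
  have hreal : (K : ℝ) ^ t * v ^ t * ((v : ℝ) ^ K * (1 - ((v : ℝ) ^ t)⁻¹)) ^ N
      < ((K : ℝ) - k + 1) * (v : ℝ) ^ (K * N) := by
    calc (K : ℝ) ^ t * v ^ t * ((v : ℝ) ^ K * (1 - ((v : ℝ) ^ t)⁻¹)) ^ N
        = ((K : ℝ) * v) ^ t * (1 - ((v : ℝ) ^ t)⁻¹) ^ N * (v : ℝ) ^ (K * N) := by
          rw [mul_pow, pow_mul]; ring
      _ < ((K : ℝ) - k + 1) * (v : ℝ) ^ (K * N) := mul_lt_mul_of_pos_right h (pow_pos hv' _)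
  rw [← hsub] at hreal
  obtain ⟨A, hA⟩ := exists_card_uncovered_le (N := N) (t := t) (K - k) (by
    rw [← Nat.cast_lt (α := ℝ)]
    push_cast [hk]
    exact hreal)
  exact CAN_le_of_card_uncovered_le ht hk A hA

theorem log_div_sub_one_pos {x : ℝ} (hx : 1 < x) : 0 < log (x / (x - 1)) :=
  log_pos <| (one_lt_div (by linarith)).mpr (by linarith)

theorem one_sub_inv_eq_exp_neg_log {x : ℝ} (hx : 1 < x) :
    1 - x⁻¹ = exp (-log (x / (x - 1))) := by
  rw [exp_neg, exp_log (div_pos (by linarith) (by linarith)), inv_div]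
  field_simp

theorem CAN_le_of_log_le {N t k v : ℕ} (ht : 0 < t) (htk : t ≤ k) (hv : 1 < v)
    (hN : ((t : ℝ) - 1) * log k + t * log (2 * v) ≤ N * log ((v : ℝ) ^ t / ((v : ℝ) ^ t - 1))) :
    CAN t k v ≤ N := by
  set L := log ((v : ℝ) ^ t / ((v : ℝ) ^ t - 1))
  have hk : (0 : ℝ) < k := by exact_mod_cast ht.trans_le htk
  have hv' : (0 : ℝ) < 2 * v := by positivity
  have hvt : (1 : ℝ) < (v : ℝ) ^ t := one_lt_pow₀ (by exact_mod_cast hv) ht.ne'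
  apply CAN_le_of_expected_uncovered_lt (K := 2 * k) ht (by omega) (by omega) (by omega)
  calc (((2 * k : ℕ) : ℝ) * v) ^ t * (1 - ((v : ℝ) ^ t)⁻¹) ^ N
      = exp (t * log (2 * v) + t * log k + N * -L) := by
        rw [exp_add, exp_add, exp_nat_mul, exp_nat_mul, exp_nat_mul, exp_log hv', exp_log hk,
          ← one_sub_inv_eq_exp_neg_log hvt]
        push_cast
        ring
    _ ≤ exp (log k) := exp_le_exp.mpr (by linarith)
    _ < ((2 * k : ℕ) : ℝ) - k + 1 := by
        rw [exp_log hk]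
        push_cast
        linarith

theorem CAN_div_log_le {t k v : ℕ} (ht : 0 < t) (htk : t ≤ k) (hk : 1 < k) (hv : 1 < v) :
    (CAN t k v : ℝ) / log k ≤ ((t : ℝ) - 1) / log ((v : ℝ) ^ t / ((v : ℝ) ^ t - 1)) +
      (t * log (2 * v) / log ((v : ℝ) ^ t / ((v : ℝ) ^ t - 1)) + 1) / log k := by
  set L := log ((v : ℝ) ^ t / ((v : ℝ) ^ t - 1))
  set x := (((t : ℝ) - 1) * log k + t * log (2 * v)) / L
  have hL : 0 < L := log_div_sub_one_pos (one_lt_pow₀ (by exact_mod_cast hv) ht.ne')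
  have hlogk : 0 < log k := log_pos (by exact_mod_cast hk)
  have hx : 0 ≤ x := by
    have : (1 : ℝ) ≤ t := by exact_mod_cast ht
    have : 0 ≤ log (2 * v) := log_nonneg (by norm_cast; omega)
    positivity
  have hCAN : (CAN t k v : ℝ) ≤ ⌈x⌉₊ := by
    refine Nat.cast_le.mpr (CAN_le_of_log_le ht htk hv ?_)
    rw [← div_le_iff₀ hL]
    exact Nat.le_ceil x
  calc (CAN t k v : ℝ) / log k ≤ (x + 1) / log k :=
        div_le_div_of_nonneg_right (hCAN.trans (Nat.ceil_lt_add_one hx).le) hlogk.le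
    _ = _ := by
        simp only [x]
        field_simp
        ring

theorem gss_bound (t v : ℕ) (ht : 2 ≤ t) (hv : 2 ≤ v) :
    Filter.limsup (fun k : ℕ => (CAN t k v : ℝ) / Real.log k) Filter.atTop ≤
      ((t : ℝ) - 1) / Real.log ((v : ℝ) ^ t / ((v : ℝ) ^ t - 1)) := by
  set L := log ((v : ℝ) ^ t / ((v : ℝ) ^ t - 1))
  set g : ℕ → ℝ := fun k => ((t : ℝ) - 1) / L + (t * log (2 * v) / L + 1) / log k
  have hg : Tendsto g atTop (𝓝 (((t : ℝ) - 1) / L)) := by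
    simpa using tendsto_const_nhds.add
      (tendsto_const_nhds.div_atTop (tendsto_log_atTop.comp tendsto_natCast_atTop_atTop))
  have hle : ∀ᶠ k : ℕ in atTop, (CAN t k v : ℝ) / log k ≤ g k := by
    filter_upwards [eventually_ge_atTop t] with k hk
    exact CAN_div_log_le (by omega) hk (by omega) (by omega)
  have hcobdd : IsCoboundedUnder (· ≤ ·) atTop fun k : ℕ => (CAN t k v : ℝ) / log k :=
    isCoboundedUnder_le_of_le atTop fun k => div_nonneg (Nat.cast_nonneg _) (log_natCast_nonneg k)
  calc limsup (fun k : ℕ => (CAN t k v : ℝ) / log k) atTop ≤ limsup g atTop :=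
        limsup_le_limsup hle hcobdd hg.isBoundedUnder_le
    _ = ((t : ℝ) - 1) / L := hg.limsup_eq
end

section
/- Let t ≥ 2 be a fixed integer and v a fixed prime power with v ≥ 2. Then d(t,v) = limsup_{k→∞} CAN(t,k,v)/log k ≤ v(v−1)(t − 1) / log(v^{t−1}/(v^{t−1} − v + 1)). -/
open Finset Function Real Filter Topology

section AffineOrbit

variable {ι F : Type*} [Fintype ι] [Field F] [Fintype F] [DecidableEq F]

def affineOrbit (τ : ι → F) : Finset (ι → F) :=
  univ.image fun ab : Fˣ × F => fun i => (ab.1 : F) * τ i + ab.2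

theorem card_affineOrbit {τ : ι → F} (hτ : ∃ i j, τ i ≠ τ j) :
    #(affineOrbit τ) = Fintype.card F * (Fintype.card F - 1) := by
  rw [affineOrbit, card_image_of_injective, card_univ, Fintype.card_prod, Fintype.card_units,
    mul_comm]
  rintro ⟨a, b⟩ ⟨a', b'⟩ h
  obtain ⟨i, j, hij⟩ := hτ
  have hi := congrFun h i
  have hj := congrFun h j
  dsimp only at hi hj
  have ha : (a : F) = a' := by
    have : ((a : F) - a') * (τ i - τ j) = 0 := by linear_combination hi - hj
    exact sub_eq_zero.mp ((mul_eq_zero.mp this).resolve_right (sub_ne_zero.mpr hij))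
  have hb : b = b' := by linear_combination hi - τ i * ha
  rw [Units.val_inj.mp ha, hb]

end AffineOrbit

theorem card_filter_comp_mem {ι κ α : Type*} [Fintype ι] [Fintype κ] [Fintype α]
    [DecidableEq κ] [DecidableEq α] {c : ι → κ} (hc : Injective c) (S : Finset (ι → α)) :
    #{y : κ → α | y ∘ c ∈ S} = #S * Fintype.card α ^ (Fintype.card κ - Fintype.card ι) := by
  let e : (κ → α) ≃ (ι → α) × ({j // j ∉ Set.range c} → α) :=
    (Equiv.piEquivPiSubtypeProd (· ∈ Set.range c) fun _ => α).trans
      (Equiv.prodCongr ((Equiv.ofInjective c hc).arrowCongr (Equiv.refl α)).symm (Equiv.refl _))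
  have hfilter : ({y : κ → α | y ∘ c ∈ S} : Finset _) = (S ×ˢ univ).map e.symm.toEmbedding := by
    ext y
    rw [mem_map_equiv, Equiv.symm_symm, mem_product]
    simp only [mem_filter, mem_univ, true_and, and_true]
    rfl
  rw [hfilter, card_map, card_product, card_univ, Fintype.card_fun, Fintype.card_subtype_compl,
    Set.card_range_of_injective hc]

section Seed

variable {κ F : Type*} [Fintype κ] [DecidableEq κ] [Field F] [Fintype F] [DecidableEq F]
  {t n : ℕ}

def Misses (x : Fin n → κ → F) (c : Fin t → κ) (τ : Fin t → F) : Prop :=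
  Injective c ∧ (∃ i j, τ i ≠ τ j) ∧ ∀ j, x j ∘ c ∉ affineOrbit τ

instance (x : Fin n → κ → F) (c : Fin t → κ) (τ : Fin t → F) : Decidable (Misses x c τ) := by
  unfold Misses; infer_instance

theorem card_misses {c : Fin t → κ} (hc : Injective c) {τ : Fin t → F}
    (hτ : ∃ i j, τ i ≠ τ j) :
    #{x : Fin n → κ → F | Misses x c τ} = ((Fintype.card F ^ t
      - Fintype.card F * (Fintype.card F - 1)) * Fintype.card F ^ (Fintype.card κ - t)) ^ n := by
  have htκ : t ≤ Fintype.card κ := by simpa using Fintype.card_le_of_injective c hc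
  have hfilter : ({x | Misses x c τ} : Finset (Fin n → κ → F))
      = Fintype.piFinset fun _ => ({y | y ∘ c ∉ affineOrbit τ} : Finset (κ → F)) := by
    ext x; simp [Misses, hc, hτ]
  have hcompl := card_filter_add_card_filter_not (s := univ) (· ∘ c ∈ affineOrbit τ)
  rw [card_filter_comp_mem hc, card_affineOrbit hτ, card_univ, Fintype.card_fun,
    Fintype.card_fin, ← Nat.sub_add_cancel htκ, pow_add, Nat.add_sub_cancel] at hcompl
  rw [hfilter, Fintype.card_piFinset_const, Nat.sub_mul, mul_comm (_ ^ t)]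
  congr 1
  omega

theorem exists_card_misses_le {m : ℕ} (htκ : t ≤ Fintype.card κ)
    (h : Fintype.card κ ^ t * Fintype.card F ^ t
        * (Fintype.card F ^ t - Fintype.card F * (Fintype.card F - 1)) ^ n
      ≤ m * (Fintype.card F ^ t) ^ n) :
    ∃ x : Fin n → κ → F, #{p : (Fin t → κ) × (Fin t → F) | Misses x p.1 p.2} ≤ m := by
  set q := Fintype.card F
  set W := q ^ t - q * (q - 1)
  obtain ⟨x, -, hx⟩ := exists_le_of_sum_le (s := univ) (g := fun _ => m) univ_nonempty <|
    calc ∑ x : Fin n → κ → F, #{p : (Fin t → κ) × (Fin t → F) | Misses x p.1 p.2}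
        = ∑ p : (Fin t → κ) × (Fin t → F), #{x : Fin n → κ → F | Misses x p.1 p.2} := by
          simp only [card_filter]
          exact sum_comm
      _ ≤ ∑ _p : (Fin t → κ) × (Fin t → F), (W * q ^ (Fintype.card κ - t)) ^ n := by
          refine sum_le_sum fun p _ => ?_
          by_cases hp : Injective p.1 ∧ ∃ i j, p.2 i ≠ p.2 j
          · exact (card_misses hp.1 hp.2).le
          · rw [card_eq_zero.mpr (filter_eq_empty_iff.mpr fun x _ hx => hp ⟨hx.1, hx.2.1⟩)]
            exact Nat.zero_le _
      _ = Fintype.card κ ^ t * q ^ t * W ^ n * (q ^ (Fintype.card κ - t)) ^ n := by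
          rw [sum_const, card_univ, Fintype.card_prod, Fintype.card_fun, Fintype.card_fun,
            Fintype.card_fin, smul_eq_mul]
          ring
      _ ≤ m * (q ^ t) ^ n * (q ^ (Fintype.card κ - t)) ^ n := Nat.mul_le_mul_right _ h
      _ = ∑ _x : Fin n → κ → F, m := by
          rw [mul_assoc, ← mul_pow, ← pow_add, Nat.add_sub_cancel' htκ]
          simp [q, mul_comm]
  exact ⟨x, hx⟩

end Seed

theorem exists_embedding_comp_notMem {κ : Type*} [Fintype κ] [DecidableEq κ] {t k : ℕ}
    (ht : 0 < t) (B : Finset (Fin t → κ)) (hB : #B + k ≤ Fintype.card κ) :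
    ∃ e : Fin k ↪ κ, ∀ c : Fin t → Fin k, e ∘ c ∉ B := by
  let D := B.image fun c => c ⟨0, ht⟩
  have hk : Fintype.card (Fin k) ≤ Fintype.card {j // j ∉ D} := by
    rw [Fintype.card_fin, Fintype.card_subtype_compl, Fintype.card_coe]
    have : #D ≤ #B := card_image_le
    omega
  obtain ⟨e⟩ := Function.Embedding.nonempty_of_card_le hk
  exact ⟨e.trans (Embedding.subtype _), fun c hc => (e (c ⟨0, ht⟩)).2 (mem_image_of_mem _ hc)⟩

section AffineExpansion

variable {ι κ F : Type*} [Field F] {n : ℕ}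

def affineExpansion (x : Fin n → κ → F) : Fin n × Fˣ × F ⊕ F → κ → F
  | .inl (j, a, b) => fun col => a * x j col + b
  | .inr b => fun _ => b

theorem exists_affineExpansion_eq [Fintype ι] [Fintype F] [DecidableEq F] {x : Fin n → κ → F}
    (c : ι → κ) (τ : ι → F) (hx : (∃ i j, τ i ≠ τ j) → ∃ j, x j ∘ c ∈ affineOrbit τ) :
    ∃ r, ∀ i, affineExpansion x r (c i) = τ i := by
  by_cases hτ : ∃ i j, τ i ≠ τ j
  · obtain ⟨j, hj⟩ := hx hτ
    obtain ⟨⟨a, b⟩, -, hab⟩ := mem_image.mp hj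
    refine ⟨.inl (j, a⁻¹, -(a⁻¹ * b)), fun i => ?_⟩
    have hi : a * τ i + b = x j (c i) := congrFun hab i
    simp [affineExpansion, ← hi, mul_add]
  · push Not at hτ
    cases isEmpty_or_nonempty ι with
    | inl _ => exact ⟨.inr 0, isEmptyElim⟩
    | inr h => exact ⟨.inr (τ h.some), fun i => hτ _ i⟩

end AffineExpansion

theorem CAN_le_of_forall_covers {R α : Type*} [Fintype R] [Fintype α] {t k : ℕ}
    (A : R → Fin k → α)
    (hA : ∀ c : Fin t → Fin k, Injective c → ∀ τ : Fin t → α, ∃ r, ∀ i, A r (c i) = τ i) :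
    CAN t k (Fintype.card α) ≤ Fintype.card R := by
  let eR := Fintype.equivFin R
  let eα := Fintype.equivFin α
  refine Nat.sInf_le ⟨fun r j => eα (A (eR.symm r) j), fun c hc τ => ?_⟩
  obtain ⟨r, hr⟩ := hA c hc (eα.symm ∘ τ)
  exact ⟨eR r, fun i => by simp [hr]⟩

theorem CAN_le_of_pow_le (F : Type*) [Field F] [Fintype F] {t k n : ℕ} (ht : 0 < t)
    (htk : t ≤ 2 * k)
    (h : (2 * k) ^ t * Fintype.card F ^ t
        * (Fintype.card F ^ t - Fintype.card F * (Fintype.card F - 1)) ^ n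
      ≤ k * (Fintype.card F ^ t) ^ n) :
    CAN t k (Fintype.card F) ≤ n * (Fintype.card F * (Fintype.card F - 1)) + Fintype.card F := by
  classical
  obtain ⟨x, hx⟩ := exists_card_misses_le (κ := Fin (2 * k)) (F := F) (by simpa using htk)
    (by simpa using h)
  let B := ({p | Misses x p.1 p.2} : Finset ((Fin t → Fin (2 * k)) × (Fin t → F))).image Prod.fst
  have hB : #B + k ≤ Fintype.card (Fin (2 * k)) := by
    have : #B ≤ k := card_image_le.trans hx
    rw [Fintype.card_fin]
    omega
  obtain ⟨e, he⟩ := exists_embedding_comp_notMem ht B hB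
  have hcover := CAN_le_of_forall_covers (t := t) (affineExpansion fun j => x j ∘ e)
    fun c hc τ => exists_affineExpansion_eq c τ fun hτ => by
      by_contra hmiss
      push Not at hmiss
      exact he c (mem_image.mpr
        ⟨(e ∘ c, τ), mem_filter.mpr ⟨mem_univ _, e.injective.comp hc, hτ, hmiss⟩, rfl⟩)
  rwa [Fintype.card_sum, Fintype.card_prod, Fintype.card_prod, Fintype.card_fin,
    Fintype.card_units, mul_comm (_ - 1)] at hcover

/-- `v^t / (v^t - v (v - 1))`: the inverse of the probability that one random seed row misses
a fixed non-constant `t`-way interaction. -/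
noncomputable def coverRatio (t v : ℕ) : ℝ := (v : ℝ) ^ (t - 1) / ((v : ℝ) ^ (t - 1) - v + 1)

section CoverRatio

variable {t v : ℕ}

theorem one_lt_coverRatio (ht : 2 ≤ t) (hv : 2 ≤ v) : 1 < coverRatio t v := by
  have hv' : (2 : ℝ) ≤ v := by exact_mod_cast hv
  have : (v : ℝ) ≤ (v : ℝ) ^ (t - 1) := le_self_pow₀ (by linarith) (by omega)
  rw [coverRatio, one_lt_div (by linarith)]
  linarith

theorem cast_sub_mul_coverRatio (ht : 2 ≤ t) (hv : 1 ≤ v) :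
    ((v ^ t - v * (v - 1) : ℕ) : ℝ) * coverRatio t v = (v : ℝ) ^ t := by
  have hpow : (v : ℝ) ≤ (v : ℝ) ^ (t - 1) := le_self_pow₀ (by exact_mod_cast hv) (by omega)
  have hle : v * (v - 1) ≤ v ^ t := by
    have : (v * (v - 1) : ℝ) ≤ v ^ t := by
      rw [← mul_pow_sub_one (by omega : t ≠ 0)]
      gcongr
      linarith
    exact_mod_cast this
  rw [coverRatio, Nat.cast_sub hle, Nat.cast_mul, Nat.cast_sub hv, Nat.cast_pow,
    ← mul_pow_sub_one (by omega : t ≠ 0) (v : ℝ), Nat.cast_one]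
  field_simp [show (v : ℝ) ^ (t - 1) - v + 1 ≠ 0 by linarith]
  ring

theorem pow_mul_le_of_le_coverRatio_pow {k n : ℕ} (ht : 2 ≤ t) (hv : 1 ≤ v)
    (h : (k : ℝ) ^ (t - 1) * (2 * v) ^ t ≤ coverRatio t v ^ n) :
    (2 * k) ^ t * v ^ t * (v ^ t - v * (v - 1)) ^ n ≤ k * (v ^ t) ^ n := by
  rw [← Nat.cast_le (α := ℝ)]
  set W : ℝ := ((v ^ t - v * (v - 1) : ℕ) : ℝ)
  calc (((2 * k) ^ t * v ^ t * (v ^ t - v * (v - 1)) ^ n : ℕ) : ℝ)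
      = k * ((k : ℝ) ^ (t - 1) * (2 * v) ^ t) * W ^ n := by
        rw [← mul_assoc, mul_pow_sub_one (by omega)]
        push_cast [W]
        ring
    _ ≤ k * coverRatio t v ^ n * W ^ n := by gcongr
    _ = ((k * (v ^ t) ^ n : ℕ) : ℝ) := by
        rw [Nat.cast_mul, Nat.cast_pow, Nat.cast_pow, ← cast_sub_mul_coverRatio ht hv]
        ring

end CoverRatio

theorem CAN_le_mul_log_add {t v k : ℕ} (ht : 2 ≤ t) (hpp : IsPrimePow v) (hk : t ≤ k) :
    (CAN t k v : ℝ) ≤ v * (v - 1) * (t - 1) / log (coverRatio t v) * log k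
      + (v * (v - 1) * (t * log (2 * v) / log (coverRatio t v) + 1) + v) := by
  have hv := hpp.two_le
  obtain ⟨_⟩ : Nonempty (Field (Fin v)) := Fintype.nonempty_field_iff.mpr (by simpa using hpp)
  set L := log (coverRatio t v)
  have hρ := one_lt_coverRatio ht hv
  have hL : 0 < L := log_pos hρ
  have hvR : (2 : ℝ) ≤ v := by exact_mod_cast hv
  have htR : (2 : ℝ) ≤ t := by exact_mod_cast ht
  have hkR : (1 : ℝ) ≤ k := by exact_mod_cast (by omega : 1 ≤ k)
  set a := ((t : ℝ) - 1) * log k + t * log (2 * v)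
  have ha : 0 ≤ a := add_nonneg (mul_nonneg (by linarith) (log_nonneg hkR))
    (mul_nonneg (by positivity) (log_nonneg (by linarith)))
  set n := ⌈a / L⌉₊
  have hpow : (k : ℝ) ^ (t - 1) * (2 * v) ^ t ≤ coverRatio t v ^ n := by
    rw [← log_le_log_iff (by positivity) (pow_pos (by linarith) n),
      log_mul (by positivity) (by positivity), log_pow, log_pow, log_pow,
      Nat.cast_sub (by omega : 1 ≤ t), Nat.cast_one]
    have := Nat.le_ceil (a / L)
    rw [div_le_iff₀ hL] at this
    linarith
  have hCAN := CAN_le_of_pow_le (Fin v) (t := t) (k := k) (n := n) (by omega) (by omega)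
    (by simpa using pow_mul_le_of_le_coverRatio_pow ht (by omega) hpow)
  have hn : (n : ℝ) ≤ a / L + 1 := (Nat.ceil_lt_add_one (by positivity)).le
  rw [Fintype.card_fin] at hCAN
  calc (CAN t k v : ℝ) ≤ ((n * (v * (v - 1)) + v : ℕ) : ℝ) := by exact_mod_cast hCAN
    _ = n * (v * ((v : ℝ) - 1)) + v := by push_cast [Nat.cast_sub (by omega : 1 ≤ v)]; ring
    _ ≤ (a / L + 1) * (v * (v - 1)) + v := by gcongr; nlinarith
    _ = _ := by ring

theorem limsup_div_log_le {f : ℕ → ℝ} {C M : ℝ} (hf : ∀ k, 0 ≤ f k)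
    (h : ∀ᶠ k in atTop, f k ≤ C * log k + M) :
    limsup (fun k => f k / log k) atTop ≤ C := by
  have htend : Tendsto (fun k : ℕ => C + M / log k) atTop (𝓝 C) := by
    simpa using tendsto_const_nhds.add
      (tendsto_const_nhds.div_atTop (tendsto_log_atTop.comp tendsto_natCast_atTop_atTop))
  have hle : ∀ᶠ k : ℕ in atTop, f k / log k ≤ C + M / log k := by
    filter_upwards [h, eventually_gt_atTop 1] with k hk hk1
    have : 0 < log k := log_pos (by exact_mod_cast hk1)
    rw [div_le_iff₀ this, add_mul, div_mul_cancel₀ _ this.ne']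
    linarith
  have hcob : IsCoboundedUnder (· ≤ ·) atTop fun k => f k / log k :=
    isCoboundedUnder_le_of_le atTop fun k => div_nonneg (hf k) (log_natCast_nonneg k)
  exact (limsup_le_limsup hle hcob htend.isBoundedUnder_le).trans htend.limsup_eq.le

theorem frobenius_lll_bound_general (t v : ℕ) (ht : 2 ≤ t)
    (hpp : IsPrimePow v) :
    Filter.limsup (fun k : ℕ => (CAN t k v : ℝ) / Real.log k) Filter.atTop ≤
      (v : ℝ) * ((v : ℝ) - 1) * ((t : ℝ) - 1) /
        Real.log ((v : ℝ) ^ (t - 1) / ((v : ℝ) ^ (t - 1) - (v : ℝ) + 1)) :=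
  limsup_div_log_le (fun _ => Nat.cast_nonneg _)
    ((eventually_ge_atTop t).mono fun _ hk => CAN_le_mul_log_add ht hpp hk)

theorem frobenius_lll_bound (t v : ℕ) (ht : 2 ≤ t) (hv : 2 ≤ v)
    (hpp : IsPrimePow v) :
    Filter.limsup (fun k : ℕ => (CAN t k v : ℝ) / Real.log k) Filter.atTop ≤
      (v : ℝ) * ((v : ℝ) - 1) * ((t : ℝ) - 1) /
        Real.log ((v : ℝ) ^ (t - 1) / ((v : ℝ) ^ (t - 1) - (v : ℝ) + 1)) :=
  frobenius_lll_bound_general t v ht hpp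
end
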